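/- arXiv:1812.09343 — 5 statements merged into one kernel-verified Lean document; each statement's English description precedes it below -/
import Mathlib

section
/- The function f : (0,∞) → ℝ defined by f(z) = exp(-arctan(z)/z) / sqrt(1 + z²) is monotonically decreasing, and consequently f(z) ≤ exp(-1) for all z > 0. -/
/-!
The logarithm of the function is `logDamping z = -arctan z / z - log (1 + z²) / 2`, whose
derivative `(arctan z - z) / z²` is nonpositive because `arctan z ≤ z`. Since `arctan z / z` is a
difference quotient of `arctan` at `0`, `logDamping` tends to `-arctan' 0 = -1` as `z → 0⁺`, and an
antitone function lies below its right limit.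
-/

open Real Set Filter Topology

lemma arctan_le_self {x : ℝ} (hx : 0 ≤ x) : arctan x ≤ x := by
  simpa only [tan_arctan] using le_tan (arctan_nonneg.mpr hx) (arctan_lt_pi_div_two x)

theorem AntitoneOn.le_of_tendsto_nhdsGT {f : ℝ → ℝ} {a L z : ℝ} (hf : AntitoneOn f (Ioi a))
    (hlim : Tendsto f (𝓝[>] a) (𝓝 L)) (hz : a < z) : f z ≤ L :=
  ge_of_tendsto hlim <| by
    filter_upwards [Ioc_mem_nhdsGT hz] with w hw using hf hw.1 hz hw.2

noncomputable def logDamping (z : ℝ) : ℝ := -arctan z / z - log (1 + z ^ 2) / 2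

lemma hasDerivAt_logDamping {z : ℝ} (hz : z ≠ 0) :
    HasDerivAt logDamping ((arctan z - z) / z ^ 2) z := by
  have hpos : 0 < 1 + z ^ 2 := by positivity
  have hlog : HasDerivAt (fun z : ℝ => log (1 + z ^ 2)) (2 * z / (1 + z ^ 2)) z := by
    simpa using ((hasDerivAt_pow 2 z).const_add 1).log hpos.ne'
  refine (((hasDerivAt_arctan z).neg.div (hasDerivAt_id z) hz).sub
    (hlog.div_const 2)).congr_deriv ?_
  simp only [id, Pi.neg_apply]
  field_simp
  ring

lemma antitoneOn_logDamping : AntitoneOn logDamping (Ioi 0) := by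
  refine antitoneOn_of_deriv_nonpos (convex_Ioi 0)
    (fun z hz => (hasDerivAt_logDamping (ne_of_gt hz)).continuousAt.continuousWithinAt)
    (fun z hz => ?_) (fun z hz => ?_) <;> rw [interior_Ioi] at hz
  · exact (hasDerivAt_logDamping (ne_of_gt hz)).differentiableAt.differentiableWithinAt
  · rw [(hasDerivAt_logDamping (ne_of_gt hz)).deriv]
    exact div_nonpos_of_nonpos_of_nonneg (by linarith [arctan_le_self hz.le]) (sq_nonneg z)

lemma tendsto_logDamping_nhdsGT_zero : Tendsto logDamping (𝓝[>] 0) (𝓝 (-1)) := by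
  have hslope : Tendsto (fun z => arctan z / z) (𝓝[>] 0) (𝓝 1) := by
    simpa [div_eq_inv_mul] using (hasDerivAt_arctan 0).tendsto_slope_zero_right
  have hlog : Tendsto (fun z : ℝ => log (1 + z ^ 2) / 2) (𝓝[>] 0) (𝓝 0) := by
    have hne (z : ℝ) : 1 + z ^ 2 ≠ 0 := by positivity
    have : Continuous (fun z : ℝ => log (1 + z ^ 2) / 2) :=
      ((continuous_const.add (continuous_pow 2)).log hne).div_const 2
    simpa using this.continuousWithinAt.tendsto (s := Ioi 0) (x := 0)
  have hsum := hslope.neg.sub hlog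
  rw [sub_zero] at hsum
  refine hsum.congr fun z => ?_
  rw [logDamping, neg_div]

lemma exp_logDamping (z : ℝ) :
    exp (logDamping z) = exp (-arctan z / z) / √(1 + z ^ 2) := by
  rw [logDamping, exp_sub, sqrt_eq_rpow, rpow_def_of_pos (by positivity)]
  ring_nf

theorem stmt4 :
    AntitoneOn (fun z : ℝ => Real.exp (-(Real.arctan z) / z) / Real.sqrt (1 + z ^ 2))
      (Set.Ioi 0) ∧
    ∀ z : ℝ, 0 < z →
      Real.exp (-(Real.arctan z) / z) / Real.sqrt (1 + z ^ 2) ≤ Real.exp (-1) := by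
  constructor
  · intro x hx y hy hxy
    simp only [← exp_logDamping x, ← exp_logDamping y, exp_le_exp]
    exact antitoneOn_logDamping hx hy hxy
  · intro z hz
    rw [← exp_logDamping z, exp_le_exp]
    exact antitoneOn_logDamping.le_of_tendsto_nhdsGT tendsto_logDamping_nhdsGT_zero hz
end

section
/- For a > 0, the function z ↦ (exp(-z) * sin(a z))² on [0,∞) attains its maximum at z = arctan(a)/a, and consequently |exp(-z) sin(a z)| ≤ exp(-arctan(a)/a) * a / sqrt(1 + a²) for all z ≥ 0. -/
/-!
Substituting `t = a z`, the claim is that `|sin t| * exp (-t / a)` is maximal on `t ≥ 0` at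
`t₀ = arctan a`. The tangent line of `sin` at `t₀` has slope `cos t₀ = sin t₀ / a`; by concavity of
`sin` on `[0, π]` (and because the tangent line exceeds `1` from `π / 2` on) it dominates `|sin t|`
for all `t ≥ 0`, so `|sin t| ≤ sin t₀ * (1 + (t - t₀) / a) ≤ sin t₀ * exp ((t - t₀) / a)`.
Multiplying by `exp (-t / a)` gives the bound, which is attained at `t₀`.
-/

open Real Set

theorem ConcaveOn.le_add_mul_sub_of_hasDerivAt {S : Set ℝ} {f : ℝ → ℝ} {f' x y : ℝ}
    (hfc : ConcaveOn ℝ S f) (hx : x ∈ S) (hy : y ∈ S) (hf : HasDerivAt f f' x) :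
    f y ≤ f x + f' * (y - x) := by
  rcases lt_trichotomy x y with hxy | rfl | hyx
  · have := hfc.slope_le_of_hasDerivAt hx hy hxy hf
    rw [slope_def_field, div_le_iff₀ (sub_pos.2 hxy)] at this
    linarith
  · simp
  · have := hfc.le_slope_of_hasDerivAt hy hx hyx hf
    rw [slope_def_field, le_div_iff₀ (sub_pos.2 hyx)] at this
    linarith

theorem abs_sin_le_sin_add_cos_mul_sub {t₀ t : ℝ} (h₀ : 0 ≤ t₀) (h₁ : t₀ ≤ π / 2) (ht : 0 ≤ t) :
    |sin t| ≤ sin t₀ + cos t₀ * (t - t₀) := by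
  have hπ := pi_pos
  have tangent {s : ℝ} (hs₀ : 0 ≤ s) (hs : s ≤ π) : sin s ≤ sin t₀ + cos t₀ * (s - t₀) :=
    strictConcaveOn_sin_Icc.concaveOn.le_add_mul_sub_of_hasDerivAt
      ⟨h₀, by linarith⟩ ⟨hs₀, hs⟩ (hasDerivAt_sin t₀)
  rcases le_or_gt t (π / 2) with hle | hgt
  · rw [abs_of_nonneg (sin_nonneg_of_nonneg_of_le_pi ht (by linarith))]
    exact tangent ht (by linarith)
  · have hcos : 0 ≤ cos t₀ := cos_nonneg_of_neg_pi_div_two_le_of_le (by linarith) h₁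
    calc |sin t| ≤ sin (π / 2) := by rw [sin_pi_div_two]; exact abs_sin_le_one t
      _ ≤ sin t₀ + cos t₀ * (π / 2 - t₀) := tangent (by linarith) (by linarith)
      _ ≤ sin t₀ + cos t₀ * (t - t₀) := by gcongr

theorem abs_sin_mul_exp_le_sin_arctan_mul_exp {a t : ℝ} (ha : 0 < a) (ht : 0 ≤ t) :
    |sin t| * exp (-t / a) ≤ sin (arctan a) * exp (-arctan a / a) := by
  set t₀ := arctan a
  have hcos : cos t₀ = sin t₀ / a := by
    rw [sin_arctan, cos_arctan]
    field_simp
  have hsin : 0 ≤ sin t₀ := by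
    rw [sin_arctan]
    positivity
  have hline : |sin t| ≤ sin t₀ * (1 + (t - t₀) / a) := by
    have := abs_sin_le_sin_add_cos_mul_sub (arctan_nonneg.2 ha.le) (arctan_lt_pi_div_two a).le ht
    rw [hcos] at this
    linarith [show sin t₀ / a * (t - t₀) = sin t₀ * ((t - t₀) / a) by ring]
  calc |sin t| * exp (-t / a) ≤ sin t₀ * (1 + (t - t₀) / a) * exp (-t / a) := by gcongr
    _ ≤ sin t₀ * exp ((t - t₀) / a) * exp (-t / a) := by
        gcongr
        linarith [add_one_le_exp ((t - t₀) / a)]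
    _ = sin t₀ * exp (-t₀ / a) := by rw [mul_assoc, ← exp_add]; ring_nf

theorem stmt5 (a : ℝ) (ha : 0 < a) :
    IsMaxOn (fun z : ℝ => (Real.exp (-z) * Real.sin (a * z)) ^ 2) (Set.Ici 0)
      (Real.arctan a / a) ∧
    ∀ z : ℝ, 0 ≤ z →
      |Real.exp (-z) * Real.sin (a * z)| ≤
        Real.exp (-(Real.arctan a) / a) * a / Real.sqrt (1 + a ^ 2) := by
  have hmax : exp (-(arctan a / a)) * sin (a * (arctan a / a)) =
      exp (-(arctan a) / a) * a / √(1 + a ^ 2) := by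
    rw [mul_div_cancel₀ _ ha.ne', sin_arctan, neg_div]
    ring
  have hbound (z : ℝ) (hz : 0 ≤ z) :
      |exp (-z) * sin (a * z)| ≤ exp (-(arctan a) / a) * a / √(1 + a ^ 2) := by
    have := abs_sin_mul_exp_le_sin_arctan_mul_exp ha (mul_nonneg ha.le hz)
    rw [neg_div, mul_div_cancel_left₀ _ ha.ne', sin_arctan] at this
    rw [abs_mul, abs_of_pos (exp_pos _), mul_comm]
    convert this using 1
    ring
  refine ⟨fun z hz => ?_, hbound⟩
  show (exp (-z) * sin (a * z)) ^ 2 ≤ (exp (-(arctan a / a)) * sin (a * (arctan a / a))) ^ 2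
  rw [hmax, ← sq_abs]
  exact pow_le_pow_left₀ (abs_nonneg _) (hbound z hz) 2
end

section
/- Let b > 0 and λ ∈ (0, b²/4), and set β = sqrt(1 - 4λ/b²). Then for all t ≥ 0: exp(-bt/2) * (cosh(β bt/2) + (1/β) sinh(β bt/2)) ≤ 2 * exp(-λ t / b). -/
/-!
Write `s = b t` and `β = √(1 - 4λ/b²)`, so that `λ t / b = (1 - β²) s / 4`. Since
`cosh z + sinh z / β = exp z + (1/β - 1) sinh z`, bounding `sinh z` by `exp z / 2` handles
`β ≥ 1/2`, while for `β < 1/2` the bound `sinh z ≤ z exp z` leaves `(1 + x) e^{-x}` with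
`x = (1 - β) s / 2`, and `1 + x ≤ 2 e^{x/4}` absorbs the linear factor.
-/

open Real

namespace Real

lemma sinh_le_exp_div_two (z : ℝ) : sinh z ≤ exp z / 2 := by
  rw [sinh_eq]
  linarith [exp_pos (-z)]

lemma sinh_le_mul_exp (z : ℝ) : sinh z ≤ z * exp z := by
  have h : exp (-z) = exp z * exp (-(2 * z)) := by rw [← exp_add]; ring_nf
  rw [sinh_eq, h]
  nlinarith [add_one_le_exp (-(2 * z)), exp_pos z]

lemma one_add_le_two_mul_exp_div_four {x : ℝ} (hx : 0 ≤ x) : 1 + x ≤ 2 * exp (x / 4) := by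
  nlinarith [quadratic_le_exp_of_nonneg (by positivity : 0 ≤ x / 4), sq_nonneg (x / 4 - 1)]

lemma cosh_add_inv_mul_sinh_le {β z c : ℝ} (hβ0 : 0 < β) (hβ1 : β ≤ 1)
    (hc : sinh z ≤ c * exp z) :
    cosh z + 1 / β * sinh z ≤ (1 + (1 / β - 1) * c) * exp z := by
  have hβ : 0 ≤ 1 / β - 1 := by rw [sub_nonneg, le_div_iff₀ hβ0]; linarith
  have hcosh : cosh z = exp z - sinh z := by linarith [cosh_add_sinh z]
  rw [hcosh]
  nlinarith [mul_le_mul_of_nonneg_left hc hβ]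

end Real

lemma exp_mul_cosh_add_inv_mul_sinh_le {β s : ℝ} (hβ0 : 0 < β) (hβ1 : β ≤ 1) (hs : 0 ≤ s) :
    exp (-s / 2) * (cosh (β * s / 2) + 1 / β * sinh (β * s / 2)) ≤
      2 * exp (-((1 - β ^ 2) * s / 4)) := by
  have hexp : exp (-s / 2) * exp (β * s / 2) = exp (-((1 - β) * s / 2)) := by
    rw [← exp_add]; ring_nf
  rcases le_or_gt (1 / 2) β with hβ | hβ
  · have hcoef : 1 + (1 / β - 1) * (1 / 2) ≤ 2 := by
      have : 1 / β ≤ 2 := by rw [div_le_iff₀ hβ0]; linarith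
      linarith
    calc exp (-s / 2) * (cosh (β * s / 2) + 1 / β * sinh (β * s / 2))
        ≤ exp (-s / 2) * ((1 + (1 / β - 1) * (1 / 2)) * exp (β * s / 2)) := by
          gcongr
          exact cosh_add_inv_mul_sinh_le hβ0 hβ1 (by linarith [sinh_le_exp_div_two (β * s / 2)])
      _ = (1 + (1 / β - 1) * (1 / 2)) * exp (-((1 - β) * s / 2)) := by rw [← hexp]; ring
      _ ≤ 2 * exp (-((1 - β ^ 2) * s / 4)) := by
          gcongr ?_ * exp ?_
          nlinarith [mul_nonneg hs (by linarith : 0 ≤ 1 - β)]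
  · set x := (1 - β) * s / 2 with hx
    have hx0 : 0 ≤ x := div_nonneg (mul_nonneg (by linarith) hs) zero_le_two
    have hlin : (1 / β - 1) * (β * s / 2) = x := by field_simp; ring
    calc exp (-s / 2) * (cosh (β * s / 2) + 1 / β * sinh (β * s / 2))
        ≤ exp (-s / 2) * ((1 + (1 / β - 1) * (β * s / 2)) * exp (β * s / 2)) := by
          gcongr
          exact cosh_add_inv_mul_sinh_le hβ0 hβ1 (sinh_le_mul_exp _)
      _ = (1 + x) * exp (-x) := by rw [hlin, mul_left_comm, hexp]
      _ ≤ 2 * exp (x / 4) * exp (-x) := by gcongr; exact one_add_le_two_mul_exp_div_four hx0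
      _ ≤ 2 * exp (-((1 - β ^ 2) * s / 4)) := by
          rw [mul_assoc, ← exp_add]
          gcongr
          nlinarith [mul_nonneg hx0 (by linarith : 0 ≤ 1 / 2 - β)]

theorem stmt6 (b l t : ℝ) (hb : 0 < b) (hl : l ∈ Set.Ioo 0 (b ^ 2 / 4)) (ht : 0 ≤ t) :
    Real.exp (-(b * t) / 2) *
        (Real.cosh (Real.sqrt (1 - 4 * l / b ^ 2) * (b * t) / 2) +
          (1 / Real.sqrt (1 - 4 * l / b ^ 2)) *
            Real.sinh (Real.sqrt (1 - 4 * l / b ^ 2) * (b * t) / 2)) ≤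
      2 * Real.exp (-(l * t) / b) := by
  obtain ⟨hl0, hlb⟩ := hl
  have hratio : 4 * l / b ^ 2 < 1 := by rw [div_lt_one (by positivity)]; linarith
  have hβ0 : 0 < √(1 - 4 * l / b ^ 2) := sqrt_pos.2 (by linarith)
  have hratio0 : 0 < 4 * l / b ^ 2 := by positivity
  have hβ1 : √(1 - 4 * l / b ^ 2) ≤ 1 := sqrt_le_one.2 (by linarith)
  have hrate : -(l * t) / b = -((1 - √(1 - 4 * l / b ^ 2) ^ 2) * (b * t) / 4) := by
    rw [sq_sqrt (by linarith)]
    field_simp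
    ring
  rw [hrate]
  exact exp_mul_cosh_add_inv_mul_sinh_le hβ0 hβ1 (by positivity)
end

section
/- Let b > 0 and λ ∈ (0, b²/4), and set β = sqrt(1 - 4λ/b²). Then for all t ≥ 0: (1/λ) * (1 - exp(-bt/2) * (cosh(β bt/2) + (1/β) sinh(β bt/2))) ≤ σ₀ * sqrt(2t/(bλ)), where σ₀ ∈ (0,1) is any constant satisfying 1 - exp(-z) ≤ σ₀ sqrt(z) for all z ≥ 0. -/
/-! Write `s = bt/2` and `β = √(1 - 4λ/b²) ∈ (0, 1)`. Since `1/β ≥ 1` and `sinh ≥ 0` on `[0, ∞)`,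
`cosh(βs) + sinh(βs)/β ≥ exp(βs)`, so the quantity in parentheses is at most `1 - exp(-(1 - β)s)`. Moreover
`1 - β ≤ 1 - β² = 4λ/b²`, so `(1 - β)s ≤ 2λt/b`, and the hypothesis on `σ₀` at `z = 2λt/b`
gives the bound, because `√(2λt/b)/λ = √(2t/(bλ))`. -/

open Real

lemma exp_le_cosh_add_one_div_mul_sinh {β x : ℝ} (hβ₀ : 0 < β) (hβ₁ : β ≤ 1) (hx : 0 ≤ x) :
    exp x ≤ cosh x + 1 / β * sinh x := by
  have h_inv : 1 ≤ 1 / β := by rwa [le_div_iff₀ hβ₀, one_mul]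
  have h_sinh : 0 ≤ sinh x := sinh_nonneg_iff.mpr hx
  rw [← cosh_add_sinh x]
  nlinarith

lemma exp_neg_one_sub_mul_le {β s : ℝ} (hβ₀ : 0 < β) (hβ₁ : β ≤ 1) (hs : 0 ≤ s) :
    exp (-((1 - β) * s)) ≤ exp (-s) * (cosh (β * s) + 1 / β * sinh (β * s)) := by
  have h_split : exp (-((1 - β) * s)) = exp (-s) * exp (β * s) := by
    rw [← exp_add]; ring_nf
  rw [h_split]
  gcongr
  exact exp_le_cosh_add_one_div_mul_sinh hβ₀ hβ₁ (by positivity)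

lemma one_div_mul_sqrt_sq_mul {l x : ℝ} (hl : 0 < l) : 1 / l * √(l ^ 2 * x) = √x := by
  rw [sqrt_mul (sq_nonneg l), sqrt_sq hl.le]
  field_simp

theorem stmt7_general (b l t σ₀ : ℝ) (hb : 0 < b) (hl : l ∈ Set.Ioo 0 (b ^ 2 / 4)) (ht : 0 ≤ t)
    (hσbound : ∀ z : ℝ, 0 ≤ z → 1 - Real.exp (-z) ≤ σ₀ * Real.sqrt z) :
    (1 / l) * (1 - Real.exp (-(b * t) / 2) *
        (Real.cosh (Real.sqrt (1 - 4 * l / b ^ 2) * (b * t) / 2) +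
          (1 / Real.sqrt (1 - 4 * l / b ^ 2)) *
            Real.sinh (Real.sqrt (1 - 4 * l / b ^ 2) * (b * t) / 2))) ≤
      σ₀ * Real.sqrt (2 * t / (b * l)) := by
  obtain ⟨hl₀, hl₁⟩ := hl
  set u := 1 - 4 * l / b ^ 2
  have hu₀ : 0 < u := by rw [sub_pos, div_lt_one (by positivity)]; linarith
  have hu₁ : u ≤ 1 := sub_le_self _ (by positivity)
  set s := b * t / 2
  have hs : 0 ≤ s := by positivity
  have h_exponent : (1 - √u) * s ≤ 2 * l * t / b := calc
    (1 - √u) * s ≤ (1 - u) * s := by gcongr; exact le_sqrt_self_iff.mpr hu₁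
    _ = 2 * l * t / b := by simp only [u, s]; field_simp; ring
  have h_sq : 2 * l * t / b = l ^ 2 * (2 * t / (b * l)) := by field_simp
  rw [show -(b * t) / 2 = -s by ring, show √u * (b * t) / 2 = √u * s by ring]
  calc 1 / l * (1 - exp (-s) * (cosh (√u * s) + 1 / √u * sinh (√u * s)))
      ≤ 1 / l * (1 - exp (-(2 * l * t / b))) := by
        gcongr
        exact (exp_le_exp.mpr (neg_le_neg h_exponent)).trans
          (exp_neg_one_sub_mul_le (sqrt_pos.mpr hu₀) (sqrt_le_one.mpr hu₁) hs)
    _ ≤ 1 / l * (σ₀ * √(2 * l * t / b)) := by gcongr; exact hσbound _ (by positivity)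
    _ = σ₀ * √(2 * t / (b * l)) := by rw [mul_left_comm, h_sq, one_div_mul_sqrt_sq_mul hl₀]

theorem stmt7 (b l t σ₀ : ℝ) (hb : 0 < b) (hl : l ∈ Set.Ioo 0 (b ^ 2 / 4)) (ht : 0 ≤ t)
    (hσ : σ₀ ∈ Set.Ioo (0:ℝ) 1)
    (hσbound : ∀ z : ℝ, 0 ≤ z → 1 - Real.exp (-z) ≤ σ₀ * Real.sqrt z) :
    (1 / l) * (1 - Real.exp (-(b * t) / 2) *
        (Real.cosh (Real.sqrt (1 - 4 * l / b ^ 2) * (b * t) / 2) +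
          (1 / Real.sqrt (1 - 4 * l / b ^ 2)) *
            Real.sinh (Real.sqrt (1 - 4 * l / b ^ 2) * (b * t) / 2))) ≤
      σ₀ * Real.sqrt (2 * t / (b * l)) :=
  stmt7_general b l t σ₀ hb hl ht hσbound
end

section
/- Let φ : (0,∞) → (0,∞) be monotonically increasing and suppose there exists a continuous, monotonically increasing G : (0,∞) → (0,∞) with φ(γα) ≤ G(γ) φ(α) for all γ > 0, α > 0. Then Φ[φ](σδ) ≤ Φ[G](σ) Φ[φ](δ) for all σ > 0, δ > 0, where Φ[χ](δ) = δ² / inf{α > 0 : α χ(α) ≥ δ²}. -/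
/-!
Write `a = ĥφ⁻¹(δ)` and `b = ĥG⁻¹(σ)`. The bound `φ(γα) ≤ G(γ) φ(α)` gives
`ĥφ(γβ) ≤ ĥG(γ) ĥφ(β)`. If `ĥφ(x) ≥ σδ` and `0 < γ < b`, then `ĥG(γ) < σ` forces
`ĥφ(x / γ) ≥ δ`, i.e. `a ≤ x / γ`; letting `γ ↑ b` yields `a b ≤ ĥφ⁻¹(σδ)`, and dividing
`(σδ)²` by both sides gives the claim.
-/

/-- `hhat φ α = sqrt (α * φ α)`. -/
noncomputable def hhat (φ : ℝ → ℝ) (α : ℝ) : ℝ := Real.sqrt (α * φ α)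

/-- Generalized inverse `hhatInv φ δ = inf {α > 0 | hhat φ α ≥ δ}`. -/
noncomputable def hhatInv (φ : ℝ → ℝ) (δ : ℝ) : ℝ := sInf {α : ℝ | 0 < α ∧ δ ≤ hhat φ α}

/-- Noise-free to noisy transform `Φ[φ](δ) = δ² / hhatInv φ δ`. -/
noncomputable def Phi (φ : ℝ → ℝ) (δ : ℝ) : ℝ := δ ^ 2 / hhatInv φ δ

section hhat

variable {φ G : ℝ → ℝ} {α β γ δ σ : ℝ}

lemma hhat_mul_le (hγ : 0 < γ) (hβ : 0 < β) (hG : 0 ≤ G γ)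
    (h : φ (γ * β) ≤ G γ * φ β) : hhat φ (γ * β) ≤ hhat G γ * hhat φ β := by
  rw [hhat, hhat, hhat, ← Real.sqrt_mul (mul_nonneg hγ.le hG)]
  apply Real.sqrt_le_sqrt
  calc γ * β * φ (γ * β) ≤ γ * β * (G γ * φ β) := by gcongr
    _ = γ * G γ * (β * φ β) := by ring

lemma hhatInv_le (hα : 0 < α) (h : δ ≤ hhat φ α) : hhatInv φ δ ≤ α :=
  csInf_le ⟨0, fun _ hx => hx.1.le⟩ ⟨hα, h⟩

lemma hhat_lt_of_lt_hhatInv (hγ : 0 < γ) (h : γ < hhatInv φ δ) : hhat φ γ < δ :=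
  lt_of_not_ge fun hle => (hhatInv_le hγ hle).not_gt h

variable (hφmono : MonotoneOn φ (Set.Ioi 0)) (hφpos : ∀ α > 0, 0 < φ α)
include hφmono hφpos

lemma hhatInv_set_nonempty (δ : ℝ) : {α : ℝ | 0 < α ∧ δ ≤ hhat φ α}.Nonempty := by
  have h1 : 0 < φ 1 := hφpos 1 one_pos
  set A := max 1 (δ ^ 2 / φ 1)
  have hA : 0 < A := lt_max_of_lt_left one_pos
  refine ⟨A, hA, (le_abs_self δ).trans (Real.abs_le_sqrt ?_)⟩
  calc δ ^ 2 = δ ^ 2 / φ 1 * φ 1 := by field_simp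
    _ ≤ A * φ A := mul_le_mul (le_max_right _ _)
        (hφmono (Set.mem_Ioi.2 one_pos) hA (le_max_left _ _)) h1.le hA.le

lemma hhatInv_pos (hδ : 0 < δ) : 0 < hhatInv φ δ := by
  have h1 : 0 < φ 1 := hφpos 1 one_pos
  refine (lt_min one_pos (by positivity : 0 < δ ^ 2 / φ 1)).trans_le
    (le_csInf (hhatInv_set_nonempty hφmono hφpos δ) ?_)
  rintro x ⟨hx, hδx⟩
  rcases le_or_gt 1 x with h | h
  · exact (min_le_left _ _).trans h
  · have hsq : δ ^ 2 ≤ x * φ x :=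
      (Real.le_sqrt hδ.le (mul_pos hx (hφpos x hx)).le).mp hδx
    have hφx : φ x ≤ φ 1 := hφmono hx (Set.mem_Ioi.2 one_pos) h.le
    refine (min_le_right _ _).trans ((div_le_iff₀ h1).mpr ?_)
    exact hsq.trans (mul_le_mul_of_nonneg_left hφx hx.le)

lemma hhatInv_mul_hhatInv_le (hG : ∀ γ > 0, 0 ≤ G γ)
    (hsub : ∀ γ > 0, ∀ α > 0, φ (γ * α) ≤ G γ * φ α) (hδ : 0 < δ) :
    hhatInv G σ * hhatInv φ δ ≤ hhatInv φ (σ * δ) := by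
  have ha := hhatInv_pos hφmono hφpos hδ
  refine le_csInf (hhatInv_set_nonempty hφmono hφpos _) ?_
  rintro x ⟨hx, hσδx⟩
  rw [← le_div_iff₀ ha]
  refine le_of_forall_lt_imp_le_of_dense fun γ hγb => ?_
  rcases le_or_gt γ 0 with hγ | hγ
  · exact hγ.trans (by positivity)
  have hβ : 0 < x / γ := by positivity
  have hx_eq : γ * (x / γ) = x := mul_div_cancel₀ x hγ.ne'
  have hGγ : hhat G γ < σ := hhat_lt_of_lt_hhatInv hγ hγb
  have hmul := hhat_mul_le hγ hβ (hG γ hγ) (hsub γ hγ _ hβ)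
  rw [hx_eq] at hmul
  have hδβ : δ ≤ hhat φ (x / γ) := by
    by_contra! hlt
    have h₁ : hhat G γ * hhat φ (x / γ) ≤ hhat G γ * δ :=
      mul_le_mul_of_nonneg_left hlt.le (Real.sqrt_nonneg _)
    linarith [mul_lt_mul_of_pos_right hGγ hδ]
  rw [le_div_iff₀ ha, mul_comm, ← le_div_iff₀ hγ]
  exact hhatInv_le hβ hδβ

end hhat

theorem stmt14_general (φ G : ℝ → ℝ)
    (hφmono : MonotoneOn φ (Set.Ioi 0)) (hφpos : ∀ α > 0, 0 < φ α)
    (hGmono : MonotoneOn G (Set.Ioi 0))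
    (hGpos : ∀ γ > 0, 0 < G γ)
    (hsub : ∀ γ > 0, ∀ α > 0, φ (γ * α) ≤ G γ * φ α) :
    ∀ σ > 0, ∀ δ > 0, Phi φ (σ * δ) ≤ Phi G σ * Phi φ δ := by
  intro σ hσ δ hδ
  have ha := hhatInv_pos hφmono hφpos hδ
  have hb := hhatInv_pos hGmono hGpos hσ
  have hkey : hhatInv G σ * hhatInv φ δ ≤ hhatInv φ (σ * δ) :=
    hhatInv_mul_hhatInv_le hφmono hφpos (fun γ hγ => (hGpos γ hγ).le) hsub hδ
  calc Phi φ (σ * δ) ≤ (σ * δ) ^ 2 / (hhatInv G σ * hhatInv φ δ) := by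
        rw [Phi]; gcongr
    _ = Phi G σ * Phi φ δ := by rw [Phi, Phi]; field_simp

theorem stmt14 (φ G : ℝ → ℝ)
    (hφmono : MonotoneOn φ (Set.Ioi 0)) (hφpos : ∀ α > 0, 0 < φ α)
    (hGcont : ContinuousOn G (Set.Ioi 0)) (hGmono : MonotoneOn G (Set.Ioi 0))
    (hGpos : ∀ γ > 0, 0 < G γ)
    (hsub : ∀ γ > 0, ∀ α > 0, φ (γ * α) ≤ G γ * φ α) :
    ∀ σ > 0, ∀ δ > 0, Phi φ (σ * δ) ≤ Phi G σ * Phi φ δ :=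
  stmt14_general φ G hφmono hφpos hGmono hGpos hsub
end
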